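/- Let (X, μ) be a nonatomic standard Borel probability space and let T be an aperiodic automorphism of (X, μ). Then for every sequence ψ : ℕ → ℝ with ψ(N) > 0 for all N and ψ(N) → 0, there exist a measurable set A ⊆ X with μ(A) = 1/2 and a strictly increasing sequence of positive integers N_j such that, writing f = χ_A, for every j: ‖f_{N_j}(T, ·) − 1/2‖_{L¹(μ)} ≥ 2^{−j−2} and ψ(N_j) ≤ 2^{−j−2}/j. -/

import Mathlib

open MeasureTheory Filter Set

/-- The Birkhoff (time) average `f_N(T, x) = (1/N) ∑_{i=1}^{N} f(T^i x)`. -/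
noncomputable def birkhoffAvg {X : Type*} (T : X → X) (f : X → ℝ) (N : ℕ) (x : X) : ℝ :=
  (N : ℝ)⁻¹ * ∑ i ∈ Finset.Icc 1 N, f (T^[i] x)

/-!
By Rokhlin's lemma there is, for every `j`, a tower of height `2 N_j` (disjoint levels
`T^i B_j`, `0 ≤ i < 2 N_j`) of total measure `2^{-j-1}`. These measures sum to `1/2`, so a set `A`
of measure `1/2` can contain all the towers (nonatomicity pads it up). On the lower half `G_j` of
the `j`-th tower the first `N_j` iterates stay in `A`, so `f_{N_j} = 1` on `G_j`; as `f_{N_j}` has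
mean `1/2`, its `L¹` distance to `1/2` is at least `μ G_j = 2^{-j-2}`. The times `N_j` are chosen
first, so large that `ψ(N_j)` is small.

Rokhlin's lemma: a countable separating family and aperiodicity cover `X` by countably many bases
of towers of height `2n`; merging them greedily gives a base `C` whose orbit-thickening is conull.
Then `μ C ≤ 1/(2n)` and almost every backward orbit meets `C`. Cutting each excursion away
from `C` into blocks of length `n` leaves out only points that return to `C` within `n` steps,
a set of measure at most `n μ C ≤ 1/2`.
-/

open scoped ENNReal

namespace MeasurableEquiv

variable {X : Type*} [MeasurableSpace X]

instance instGroup : Group (X ≃ᵐ X) where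
  mul f g := g.trans f
  one := refl X
  inv := symm
  mul_assoc _ _ _ := rfl
  one_mul _ := rfl
  mul_one _ := rfl
  inv_mul_cancel f := ext (funext f.symm_apply_apply)

theorem coe_mul (f g : X ≃ᵐ X) : ⇑(f * g) = f ∘ g := rfl

theorem zpow_add_apply (T : X ≃ᵐ X) (a b : ℤ) (x : X) :
    (T ^ (a + b)) x = (T ^ a) ((T ^ b) x) := by
  rw [zpow_add]; rfl

theorem coe_pow (T : X ≃ᵐ X) (n : ℕ) : ⇑(T ^ n) = (⇑T)^[n] := by
  induction n with
  | zero => rfl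
  | succ n ih => rw [pow_succ, coe_mul, ih, Function.iterate_succ]

theorem zpow_natCast_apply (T : X ≃ᵐ X) (n : ℕ) (x : X) : (T ^ (n : ℤ)) x = (⇑T)^[n] x := by
  rw [zpow_natCast, coe_pow]

theorem measurePreserving_zpow {μ : Measure X} {T : X ≃ᵐ X} (hT : MeasurePreserving T μ μ)
    (m : ℤ) : MeasurePreserving (T ^ m) μ μ := by
  induction m using Int.induction_on with
  | zero => exact MeasurePreserving.id μ
  | succ m ih => rw [zpow_add_one]; exact ih.comp hT
  | pred m ih => rw [zpow_sub_one]; exact ih.comp (hT.symm T)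

theorem measure_image_zpow {μ : Measure X} {T : X ≃ᵐ X} (hT : MeasurePreserving T μ μ) (m : ℤ)
    (s : Set X) : μ (⇑(T ^ m) '' s) = μ s := by
  rw [image_eq_preimage_symm]
  exact ((measurePreserving_zpow hT m).symm _).measure_preimage_equiv s

end MeasurableEquiv

theorem ProbabilityTheory.continuous_cdf (ν : Measure ℝ) [IsProbabilityMeasure ν]
    [NullSingletonClass ν] : Continuous (cdf ν) := by
  refine continuous_iff_continuousAt.2 fun x => ?_
  rw [(monotone_cdf ν).continuousAt_iff_leftLim_eq_rightLim, (cdf ν).rightLim_eq]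
  have hjump : ENNReal.ofReal (cdf ν x - Function.leftLim (cdf ν) x) = 0 := by
    rw [← StieltjesFunction.measure_singleton, measure_cdf, measure_singleton]
  have := (monotone_cdf ν).leftLim_le (le_refl x)
  rw [ENNReal.ofReal_eq_zero] at hjump
  linarith

section Sierpinski

open ProbabilityTheory

variable {X : Type*} [MeasurableSpace X] [StandardBorelSpace X] (μ : Measure X)
  [NullSingletonClass μ]

theorem exists_measurableSet_measure_eq [IsProbabilityMeasure μ] {c : ℝ≥0∞} (hc : c ≤ 1) :
    ∃ t, MeasurableSet t ∧ μ t = c := by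
  rcases hc.eq_or_lt with rfl | hc1
  · exact ⟨univ, .univ, measure_univ⟩
  rcases eq_zero_or_pos c with rfl | hc0
  · exact ⟨∅, .empty, measure_empty⟩
  obtain ⟨φ, hφ⟩ := exists_measurableEmbedding_real X
  have : IsProbabilityMeasure (μ.map φ) :=
    Measure.isProbabilityMeasure_map hφ.measurable.aemeasurable
  have : NullSingletonClass (μ.map φ) := ⟨fun y => by
    rw [hφ.map_apply]; exact (subsingleton_singleton.preimage hφ.injective).measure_zero μ⟩
  have hc_ne_top : c ≠ ⊤ := (hc1.trans ENNReal.one_lt_top).ne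
  obtain ⟨a, ha⟩ := ((tendsto_cdf_atBot (μ.map φ)).eventually
    (gt_mem_nhds (ENNReal.toReal_pos hc0.ne' hc_ne_top))).exists
  obtain ⟨b, hb⟩ := ((tendsto_cdf_atTop (μ.map φ)).eventually
    (lt_mem_nhds (ENNReal.toReal_lt_of_lt_ofReal (by simpa using hc1)))).exists
  obtain ⟨x, hx⟩ := mem_range_of_exists_le_of_exists_ge (continuous_cdf _)
    ⟨a, ha.le⟩ ⟨b, hb.le⟩
  refine ⟨φ ⁻¹' Iic x, hφ.measurable measurableSet_Iic, ?_⟩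
  rw [← hφ.map_apply, ← ofReal_cdf, hx, ENNReal.ofReal_toReal hc_ne_top]

variable [IsFiniteMeasure μ]

theorem exists_measurableSet_subset_measure_eq {s : Set X} (hs : MeasurableSet s) {r : ℝ≥0∞}
    (hr : r ≤ μ s) : ∃ t ⊆ s, MeasurableSet t ∧ μ t = r := by
  rcases eq_or_ne (μ s) 0 with hs0 | hs0
  · exact ⟨∅, empty_subset s, .empty, by rw [measure_empty, nonpos_iff_eq_zero.1 (hr.trans hs0.le)]⟩
  have : IsProbabilityMeasure μ[|s] := cond_isProbabilityMeasure hs0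
  have : NullSingletonClass μ[|s] := ⟨fun x => by
    rw [cond_apply hs, measure_mono_null inter_subset_right (measure_singleton x),
      mul_zero]⟩
  obtain ⟨t, ht, hμt⟩ := exists_measurableSet_measure_eq μ[|s]
    (c := r / μ s) (ENNReal.div_le_of_le_mul (by rwa [one_mul]))
  refine ⟨s ∩ t, inter_subset_left, hs.inter ht, ?_⟩
  rw [cond_apply hs, ← ENNReal.div_eq_inv_mul] at hμt
  rw [← ENNReal.div_mul_cancel hs0 (measure_ne_top μ s) (b := μ (s ∩ t)), hμt,
    ENNReal.div_mul_cancel hs0 (measure_ne_top μ s)]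

theorem exists_measurableSet_superset_measure_eq {s : Set X} (hs : MeasurableSet s)
    {r : ℝ≥0∞} (hsr : μ s ≤ r) (hr : r ≤ μ univ) : ∃ t, s ⊆ t ∧ MeasurableSet t ∧ μ t = r := by
  obtain ⟨u, hus, hu, hμu⟩ := exists_measurableSet_subset_measure_eq μ hs.compl (r := r - μ s)
    (by rw [measure_compl hs (measure_ne_top μ s)]; exact tsub_le_tsub_right hr _)
  refine ⟨s ∪ u, subset_union_left, hs.union hu, ?_⟩
  rw [measure_union (disjoint_compl_right.mono_right hus) hu, hμu, add_tsub_cancel_of_le hsr]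

end Sierpinski

namespace MeasurableEquiv

variable {X : Type*} [MeasurableSpace X] {μ : Measure X} {T : X ≃ᵐ X} {n : ℕ} {B D : Set X}

/-- `B` is the base of a tower of height `n`: the levels `T^i B`, `0 ≤ i < n`, are disjoint. -/
def IsTowerBase (T : X ≃ᵐ X) (n : ℕ) (B : Set X) : Prop :=
  ∀ k : ℤ, 0 < k → k < n → Disjoint B (⇑(T ^ k) ⁻¹' B)

def tower (T : X ≃ᵐ X) (n : ℕ) (B : Set X) : Set X :=
  ⋃ i ∈ Finset.range n, ⇑(T ^ (i : ℤ)) '' B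

def orbitThickening (T : X ≃ᵐ X) (n : ℕ) (B : Set X) : Set X :=
  {x | ∃ m : ℤ, |m| < n ∧ (T ^ m) x ∈ B}

theorem measurableSet_tower (hB : MeasurableSet B) : MeasurableSet (tower T n B) :=
  .biUnion (to_countable _) fun i _ => (T ^ (i : ℤ)).measurableSet_image.2 hB

theorem zpow_mem_tower {m m' k : ℕ} {x : X} (hx : x ∈ tower T m B) (hk : m + k ≤ m') :
    (T ^ (k : ℤ)) x ∈ tower T m' B := by
  simp only [tower, mem_iUnion, Finset.mem_range] at hx ⊢
  obtain ⟨l, hl, b, hb, rfl⟩ := hx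
  exact ⟨k + l, by omega, b, hb, by rw [Nat.cast_add, zpow_add_apply]⟩

theorem measurableSet_orbitThickening (hB : MeasurableSet B) :
    MeasurableSet (orbitThickening T n B) := by
  simp only [orbitThickening, ofPred_exists, ofPred_and]
  exact .iUnion fun m => (MeasurableSet.const _).inter ((T ^ m).measurable hB)

theorem orbitThickening_mono {B' : Set X} (h : B ⊆ B') :
    orbitThickening T n B ⊆ orbitThickening T n B' :=
  fun _ ⟨m, hm, hx⟩ => ⟨m, hm, h hx⟩

theorem subset_orbitThickening (hn : 0 < n) : B ⊆ orbitThickening T n B :=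
  fun _ hx => ⟨0, by simpa using hn, hx⟩

theorem IsTowerBase.mono (h : IsTowerBase T n B) (hDB : D ⊆ B) : IsTowerBase T n D :=
  fun k hk hkn => (h k hk hkn).mono hDB (preimage_mono hDB)

theorem IsTowerBase.union (hB : IsTowerBase T n B) (hD : IsTowerBase T n D)
    (hDB : Disjoint D (orbitThickening T n B)) : IsTowerBase T n (B ∪ D) := by
  intro k hk hkn
  rw [preimage_union, disjoint_union_left, disjoint_union_right, disjoint_union_right]
  refine ⟨⟨hB k hk hkn, disjoint_left.2 fun x hxB hx => ?_⟩,
    ⟨disjoint_left.2 fun x hxD hx => ?_, hD k hk hkn⟩⟩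
  · refine disjoint_left.1 hDB hx ⟨-k, by rw [abs_neg, abs_of_pos hk]; exact hkn, ?_⟩
    rwa [← zpow_add_apply, neg_add_cancel, zpow_zero]
  · exact disjoint_left.1 hDB hxD ⟨k, by rwa [abs_of_pos hk], hx⟩

theorem isTowerBase_iUnion {s : ℕ → Set X} (hs : Monotone s) (h : ∀ i, IsTowerBase T n (s i)) :
    IsTowerBase T n (⋃ i, s i) := by
  intro k hk hkn
  simp only [preimage_iUnion, disjoint_iUnion_left, disjoint_iUnion_right]
  intro i j
  exact (h (max i j) k hk hkn).mono (hs (by omega)) (preimage_mono (hs (by omega)))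

theorem IsTowerBase.disjoint_image_zpow (h : IsTowerBase T n B) {i j : ℕ} (hij : i < j)
    (hj : j < n) : Disjoint (⇑(T ^ (i : ℤ)) '' B) (⇑(T ^ (j : ℤ)) '' B) := by
  rw [disjoint_left]
  rintro _ ⟨b, hb, rfl⟩ ⟨b', hb', hbb'⟩
  have hreturn : (T ^ ((j : ℤ) - i)) b' = b := (T ^ (i : ℤ)).injective <| by
    rw [← zpow_add_apply, add_sub_cancel, hbb']
  exact disjoint_left.1 (h (j - i) (by omega) (by omega)) hb' (by rwa [mem_preimage, hreturn])

theorem IsTowerBase.measure_tower (hT : MeasurePreserving T μ μ) (h : IsTowerBase T n B)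
    (hB : MeasurableSet B) {m : ℕ} (hm : m ≤ n) : μ (tower T m B) = m * μ B := by
  have hdisj : (↑(Finset.range m) : Set ℕ).PairwiseDisjoint fun i => ⇑(T ^ (i : ℤ)) '' B := by
    intro i hi j hj hij
    simp only [Finset.coe_range, mem_Iio] at hi hj
    rcases hij.lt_or_gt with hij | hij
    · exact h.disjoint_image_zpow hij (by omega)
    · exact (h.disjoint_image_zpow hij (by omega)).symm
  rw [tower, measure_biUnion_finset hdisj fun i _ => (T ^ (i : ℤ)).measurableSet_image.2 hB,
    Finset.sum_congr rfl fun i _ => measure_image_zpow hT _ B, Finset.sum_const,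
    Finset.card_range, nsmul_eq_mul]

theorem exists_seq_isTowerBase_cover [MeasurableSpace.CountablySeparated X] (T : X ≃ᵐ X)
    (n : ℕ) : ∃ D : ℕ → Set X, (∀ i, MeasurableSet (D i) ∧ IsTowerBase T n (D i)) ∧
      {x | ∀ k : ℕ, 0 < k → k < n → (⇑T)^[k] x ≠ x} ⊆ ⋃ i, D i := by
  obtain ⟨g, hg, hg_inj⟩ := MeasurableSpace.measurable_injection_nat_bool_of_countablySeparated X
  have hg_coord (m : ℕ) : Measurable fun x => g x m := (measurable_pi_apply m).comp hg
  -- For `0 < k < n`, the bit `(c k).1` of `g` separates the points `x` of `E c` from `T^k x`.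
  let E : (Fin n → ℕ × Bool) → Set X := fun c => {x | ∀ k : Fin n, 0 < (k : ℕ) →
    g x (c k).1 = (c k).2 ∧ g ((T ^ (k : ℤ)) x) (c k).1 ≠ (c k).2}
  obtain ⟨e, he⟩ := exists_surjective_nat (Fin n → ℕ × Bool)
  refine ⟨E ∘ e, fun i => ⟨?_, ?_⟩, ?_⟩
  · simp only [E, Function.comp_apply, ofPred_forall, ofPred_and]
    exact .iInter fun k => .iInter fun _ => (hg_coord _ (measurableSet_singleton _)).inter
      ((hg_coord _).comp (T ^ (k : ℤ)).measurable (measurableSet_singleton _)).compl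
  · intro k hk hkn
    refine disjoint_left.2 fun x hx hTx => ?_
    lift k to ℕ using hk.le
    have hk' : k < n := by exact_mod_cast hkn
    exact (hx ⟨k, hk'⟩ (by exact_mod_cast hk)).2 (hTx ⟨k, hk'⟩ (by exact_mod_cast hk)).1
  · intro x hx
    have hsep (k : Fin n) : ∃ p : ℕ × Bool, 0 < (k : ℕ) →
        g x p.1 = p.2 ∧ g ((T ^ (k : ℤ)) x) p.1 ≠ p.2 := by
      by_cases hk : 0 < (k : ℕ)
      · have hne : g ((T ^ (k : ℤ)) x) ≠ g x := by
          rw [zpow_natCast_apply]; exact hg_inj.ne (hx k hk k.2)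
        obtain ⟨m, hm⟩ := Function.ne_iff.1 hne
        exact ⟨(m, g x m), fun _ => ⟨rfl, hm⟩⟩
      · exact ⟨(0, true), fun h => absurd h hk⟩
    choose c hc using hsep
    obtain ⟨i, rfl⟩ := he c
    exact mem_iUnion.2 ⟨i, hc⟩

theorem exists_isTowerBase_orbitThickening_cover (hn : 0 < n) {D : ℕ → Set X}
    (hD : ∀ i, MeasurableSet (D i) ∧ IsTowerBase T n (D i)) :
    ∃ B, MeasurableSet B ∧ IsTowerBase T n B ∧ ⋃ i, D i ⊆ orbitThickening T n B := by
  let s : ℕ → Set X := fun i => Nat.rec ∅ (fun i B => B ∪ (D i \ orbitThickening T n B)) i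
  have hs_succ (i : ℕ) : s (i + 1) = s i ∪ (D i \ orbitThickening T n (s i)) := rfl
  have hs (i : ℕ) : MeasurableSet (s i) ∧ IsTowerBase T n (s i) := by
    induction i with
    | zero => exact ⟨.empty, fun k _ _ => empty_disjoint _⟩
    | succ i ih =>
      rw [hs_succ]
      exact ⟨ih.1.union ((hD i).1.diff (measurableSet_orbitThickening ih.1)),
        ih.2.union ((hD i).2.mono sdiff_subset) disjoint_sdiff_left⟩
  have hs_mono : Monotone s := monotone_nat_of_le_succ fun i => by
    rw [hs_succ]; exact subset_union_left
  refine ⟨⋃ i, s i, .iUnion fun i => (hs i).1, isTowerBase_iUnion hs_mono fun i => (hs i).2, ?_⟩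
  refine iUnion_subset fun i x hx => ?_
  by_cases hxi : x ∈ orbitThickening T n (s i)
  · exact orbitThickening_mono (subset_iUnion s i) hxi
  · refine subset_orbitThickening hn (mem_iUnion.2 ⟨i + 1, ?_⟩)
    rw [hs_succ]
    exact Or.inr ⟨hx, hxi⟩

theorem exists_isTowerBase_ae_mem_orbitThickening [MeasurableSpace.CountablySeparated X]
    (hTaper : μ {x | ∃ n, 1 ≤ n ∧ (⇑T)^[n] x = x} = 0) (hn : 0 < n) :
    ∃ B, MeasurableSet B ∧ IsTowerBase T n B ∧ ∀ᵐ x ∂μ, x ∈ orbitThickening T n B := by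
  obtain ⟨D, hD, hD_cover⟩ := exists_seq_isTowerBase_cover T n
  obtain ⟨B, hB, hB_tower, hB_cover⟩ := exists_isTowerBase_orbitThickening_cover hn hD
  refine ⟨B, hB, hB_tower, measure_mono_null (fun x hx => ?_) hTaper⟩
  by_contra hper
  exact hx (hB_cover (hD_cover fun k hk _ hkx => hper ⟨k, hk, hkx⟩))

theorem exists_measure_le_ae_exists_zpow_neg_mem [MeasurableSpace.CountablySeparated X]
    [IsProbabilityMeasure μ] (hT : MeasurePreserving T μ μ)
    (hTaper : μ {x | ∃ n, 1 ≤ n ∧ (⇑T)^[n] x = x} = 0) (hn : 0 < n) :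
    ∃ C, MeasurableSet C ∧ n * μ C ≤ 1 ∧ ∀ᵐ x ∂μ, ∃ b : ℕ, (T ^ (-(b : ℤ))) x ∈ C := by
  obtain ⟨C, hC, hC_tower, hC_ae⟩ := exists_isTowerBase_ae_mem_orbitThickening hTaper hn
  refine ⟨C, hC, ?_, ?_⟩
  · rw [← hC_tower.measure_tower hT hC le_rfl]
    exact prob_le_one
  -- `T^{-n} x` sees `C` within `n` steps, so `x` has seen it within the last `2n` steps.
  filter_upwards [(measurePreserving_zpow hT (-n)).quasiMeasurePreserving.ae hC_ae]
    with x ⟨m, hm, hmx⟩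
  rw [← zpow_add_apply] at hmx
  refine ⟨(n - m).toNat, ?_⟩
  convert hmx using 3
  have := abs_lt.1 hm
  omega

variable {C : Set X} {x : X}

def lastVisit (T : X ≃ᵐ X) (C : Set X) (j : ℕ) : Set X :=
  {x | (T ^ (-(j : ℤ))) x ∈ C ∧ ∀ i < j, (T ^ (-(i : ℤ))) x ∉ C}

theorem measurableSet_lastVisit (hC : MeasurableSet C) (j : ℕ) :
    MeasurableSet (lastVisit T C j) := by
  simp only [lastVisit, ofPred_and, ofPred_forall]
  exact ((T ^ _).measurable hC).inter
    (.iInter fun i => .iInter fun _ => ((T ^ _).measurable hC).compl)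

theorem lastVisit_unique {i j : ℕ} (hi : x ∈ lastVisit T C i) (hj : x ∈ lastVisit T C j) :
    i = j := by
  by_contra hij
  rcases Nat.lt_or_gt_of_ne hij with h | h
  · exact hj.2 i h hi.1
  · exact hi.2 j h hj.1

theorem zpow_mem_lastVisit_add {j k : ℕ} (hx : x ∈ lastVisit T C j)
    (hk : ∀ i : ℕ, 0 < i → i ≤ k → (T ^ (i : ℤ)) x ∉ C) :
    (T ^ (k : ℤ)) x ∈ lastVisit T C (j + k) := by
  refine ⟨?_, fun i hi => ?_⟩
  · rw [← zpow_add_apply, show -((j + k : ℕ) : ℤ) + k = -j by omega]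
    exact hx.1
  rw [← zpow_add_apply]
  rcases lt_or_ge i k with hik | hik
  · rw [show -(i : ℤ) + k = (k - i : ℕ) by omega]
    exact hk (k - i) (by omega) (by omega)
  · rw [show -(i : ℤ) + k = -(i - k : ℕ) by omega]
    exact hx.2 (i - k) (by omega)

theorem zpow_neg_mem_lastVisit_sub {j q : ℕ} (hx : x ∈ lastVisit T C j) (hq : q ≤ j) :
    (T ^ (-(q : ℤ))) x ∈ lastVisit T C (j - q) := by
  refine ⟨?_, fun i hi => ?_⟩
  · rw [← zpow_add_apply, show -((j - q : ℕ) : ℤ) + -q = -j by omega]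
    exact hx.1
  · rw [← zpow_add_apply, show -(i : ℤ) + -q = -(i + q : ℕ) by omega]
    exact hx.2 (i + q) (by omega)

def rokhlinBase (T : X ≃ᵐ X) (n : ℕ) (C : Set X) : Set X :=
  {x | (∃ m, x ∈ lastVisit T C (n * m)) ∧ ∀ k : ℕ, 0 < k → k < n → (T ^ (k : ℤ)) x ∉ C}

theorem measurableSet_rokhlinBase (hC : MeasurableSet C) :
    MeasurableSet (rokhlinBase T n C) := by
  simp only [rokhlinBase, ofPred_and, ofPred_forall, ofPred_exists]
  exact (MeasurableSet.iUnion fun m => measurableSet_lastVisit hC _).inter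
    (.iInter fun k => .iInter fun _ => .iInter fun _ => ((T ^ _).measurable hC).compl)

theorem isTowerBase_rokhlinBase : IsTowerBase T n (rokhlinBase T n C) := by
  intro k hk hkn
  lift k to ℕ using hk.le
  refine disjoint_left.2 fun x ⟨⟨m, hm⟩, hx⟩ ⟨⟨m', hm'⟩, _⟩ => ?_
  -- `T^k x` last visited `C` `n * m + k` steps ago, which is not a multiple of `n`.
  have hvisit := zpow_mem_lastVisit_add (k := k) hm fun i hi hik => hx i hi (by omega)
  have hkm := lastVisit_unique hm' hvisit
  have h1 : m < m' := Nat.lt_of_mul_lt_mul_left (a := n) (by omega)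
  have h2 : m' < m + 1 := Nat.lt_of_mul_lt_mul_left (a := n) (by rw [mul_add]; omega)
  omega

theorem mem_rokhlin_tower_union (hn : 0 < n) {b : ℕ} (hb : (T ^ (-(b : ℤ))) x ∈ C) :
    x ∈ tower T n (rokhlinBase T n C) ∪ ⋃ k ∈ Finset.Ioo 0 n, ⇑(T ^ (k : ℤ)) ⁻¹' C := by
  classical
  have hex : ∃ b : ℕ, (T ^ (-(b : ℤ))) x ∈ C := ⟨b, hb⟩
  set j := Nat.find hex
  have hj : x ∈ lastVisit T C j := ⟨Nat.find_spec hex, fun i hi => Nat.find_min hex hi⟩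
  -- `y = T^{-q} x` last visited `C` a multiple of `n` steps ago: either `y` is in the base and `x`
  -- in its tower, or `y`, hence `x`, visits `C` within the next `n` steps.
  set q := j % n
  have hy := zpow_neg_mem_lastVisit_sub hj (Nat.mod_le j n)
  rw [show j - q = n * (j / n) by have := Nat.div_add_mod j n; omega] at hy
  by_cases hfree : ∀ k : ℕ, 0 < k → k < n → (T ^ (k : ℤ)) ((T ^ (-(q : ℤ))) x) ∉ C
  · refine Or.inl (mem_biUnion (Finset.mem_range.2 (Nat.mod_lt j hn)) ⟨_, ⟨⟨j / n, hy⟩, hfree⟩, ?_⟩)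
    rw [← zpow_add_apply, add_neg_cancel, zpow_zero]; rfl
  push Not at hfree
  obtain ⟨k, hk, hkn, hkC⟩ := hfree
  rw [← zpow_add_apply] at hkC
  have hqj : q ≤ j := Nat.mod_le j n
  have hqn : q < n := Nat.mod_lt j hn
  rcases le_or_gt k q with hkq | hkq
  · rw [show (k : ℤ) + -q = -(q - k : ℕ) by omega] at hkC
    exact absurd hkC (hj.2 (q - k) (by omega))
  · rw [show (k : ℤ) + -q = (k - q : ℕ) by omega] at hkC
    exact Or.inr (mem_biUnion (Finset.mem_Ioo.2 ⟨by omega, by omega⟩) hkC)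

theorem one_le_measure_rokhlinBase_add [IsProbabilityMeasure μ] (hT : MeasurePreserving T μ μ)
    (hC : MeasurableSet C) (hn : 0 < n) (hvisit : ∀ᵐ x ∂μ, ∃ b : ℕ, (T ^ (-(b : ℤ))) x ∈ C) :
    1 ≤ n * μ (rokhlinBase T n C) + n * μ C := by
  have hcover : (univ : Set X) ≤ᵐ[μ]
      (tower T n (rokhlinBase T n C) ∪ ⋃ k ∈ Finset.Ioo 0 n, ⇑(T ^ (k : ℤ)) ⁻¹' C : Set X) :=
    hvisit.mono fun x ⟨b, hb⟩ _ => mem_rokhlin_tower_union hn hb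
  have hreturn : μ (⋃ k ∈ Finset.Ioo 0 n, ⇑(T ^ (k : ℤ)) ⁻¹' C) ≤ n * μ C := by
    refine (measure_biUnion_finset_le _ _).trans ?_
    rw [Finset.sum_congr rfl fun (k : ℕ) _ =>
      (measurePreserving_zpow hT (k : ℤ)).measure_preimage hC.nullMeasurableSet, Finset.sum_const,
      nsmul_eq_mul, Nat.card_Ioo]
    gcongr
    omega
  calc 1 = μ univ := measure_univ.symm
    _ ≤ _ := measure_mono_ae hcover
    _ ≤ _ := measure_union_le _ _
    _ ≤ n * μ (rokhlinBase T n C) + n * μ C := by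
      rw [isTowerBase_rokhlinBase.measure_tower hT (measurableSet_rokhlinBase hC) le_rfl]
      gcongr

/-- **Rokhlin's lemma**, in the weak form with towers filling half of the space. -/
theorem exists_isTowerBase_measure_eq [StandardBorelSpace X] [IsProbabilityMeasure μ]
    [NullSingletonClass μ] (hT : MeasurePreserving T μ μ)
    (hTaper : μ {x | ∃ n, 1 ≤ n ∧ (⇑T)^[n] x = x} = 0) (hn : 0 < n) {r : ℝ≥0∞}
    (hr : 2 * n * r ≤ 1) : ∃ B, MeasurableSet B ∧ IsTowerBase T n B ∧ μ B = r := by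
  obtain ⟨C, hC, hμC, hvisit⟩ :=
    exists_measure_le_ae_exists_zpow_neg_mem hT hTaper (n := 2 * n) (by omega)
  have hF := one_le_measure_rokhlinBase_add hT hC hn hvisit
  have hr' : n * r ≤ 2⁻¹ := ENNReal.le_inv_iff_mul_le.2 (by rwa [mul_comm, ← mul_assoc])
  have hC' : n * μ C ≤ 2⁻¹ :=
    ENNReal.le_inv_iff_mul_le.2 (by push_cast at hμC; rwa [mul_comm, ← mul_assoc])
  have hrF : r ≤ μ (rokhlinBase T n C) := by
    refine (ENNReal.mul_le_mul_iff_right (by simp [hn.ne']) (ENNReal.natCast_ne_top n)).1 ?_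
    refine (ENNReal.add_le_add_iff_right (a := 2⁻¹) (by simp)).1 ?_
    calc n * r + 2⁻¹ ≤ 2⁻¹ + 2⁻¹ := by gcongr
      _ = 1 := ENNReal.inv_two_add_inv_two
      _ ≤ _ := hF
      _ ≤ _ := by gcongr
  obtain ⟨B, hBF, hB, hμB⟩ :=
    exists_measurableSet_subset_measure_eq μ (measurableSet_rokhlinBase hC) hrF
  exact ⟨B, hB, isTowerBase_rokhlinBase.mono hBF, hμB⟩

end MeasurableEquiv

section BirkhoffAverage

variable {X : Type*} [MeasurableSpace X] {μ : Measure X}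

theorem two_mul_mul_measureReal_le_integral_abs [IsFiniteMeasure μ] {h : X → ℝ}
    (hh : Integrable h μ) (h0 : ∫ x, h x ∂μ = 0) {G : Set X} (hG : MeasurableSet G) {δ : ℝ}
    (hδ : ∀ x ∈ G, δ ≤ h x) : 2 * δ * μ.real G ≤ ∫ x, |h x| ∂μ := by
  have habs : ∫ x, |h x| ∂μ = 2 * ∫ x, max (h x) 0 ∂μ := by
    calc ∫ x, |h x| ∂μ = ∫ x, (2 * max (h x) 0 - h x) ∂μ := by
          congr with x
          rcases le_total 0 (h x) with hx | hx
          · rw [abs_of_nonneg hx, max_eq_left hx]; ring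
          · rw [abs_of_nonpos hx, max_eq_right hx]; ring
      _ = 2 * ∫ x, max (h x) 0 ∂μ := by
        rw [integral_sub (hh.pos_part.const_mul 2) hh, integral_const_mul, h0, sub_zero]
  have hpos : δ * μ.real G ≤ ∫ x, max (h x) 0 ∂μ := by
    rw [mul_comm, ← smul_eq_mul, ← integral_indicator_const δ hG]
    exact integral_mono ((integrable_const δ).indicator hG) hh.pos_part
      (indicator_le' (fun x hx => (hδ x hx).trans (le_max_left _ _)) fun _ _ => le_max_right _ _)
  linarith

variable {f : X → X} {A G : Set X} {N : ℕ}

omit [MeasurableSpace X] in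
theorem birkhoffAvg_indicator_eq_one {x : X} (hN : 0 < N)
    (hx : ∀ i ∈ Finset.Icc 1 N, f^[i] x ∈ A) : birkhoffAvg f (A.indicator fun _ => 1) N x = 1 := by
  rw [birkhoffAvg, Finset.sum_congr rfl fun i hi => indicator_of_mem (hx i hi) _,
    Finset.sum_const, Nat.card_Icc, Nat.add_sub_cancel, nsmul_one]
  exact inv_mul_cancel₀ (by exact_mod_cast hN.ne')

theorem integrable_indicator_one_comp [IsFiniteMeasure μ] {g : X → X} (hg : Measurable g)
    (hA : MeasurableSet A) : Integrable (fun x => A.indicator (fun _ => (1 : ℝ)) (g x)) μ :=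
  ((integrable_const (1 : ℝ)).indicator (hg hA)).congr
    (ae_of_all _ fun _ => indicator_comp_right g (g := fun _ => (1 : ℝ)))

theorem integrable_birkhoffAvg_indicator [IsFiniteMeasure μ] (hf : Measurable f)
    (hA : MeasurableSet A) : Integrable (birkhoffAvg f (A.indicator fun _ => 1) N) μ :=
  (integrable_finsetSum _ fun i _ => integrable_indicator_one_comp (hf.iterate i) hA).const_mul _

theorem integral_birkhoffAvg_indicator [IsFiniteMeasure μ] (hf : MeasurePreserving f μ μ)
    (hA : MeasurableSet A) (hN : 0 < N) :
    ∫ x, birkhoffAvg f (A.indicator fun _ => 1) N x ∂μ = μ.real A := by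
  have hiter (i : ℕ) : ∫ x, A.indicator (fun _ => (1 : ℝ)) (f^[i] x) ∂μ = μ.real A := by
    rw [← integral_congr_ae
        (ae_of_all _ fun _ => indicator_comp_right f^[i] (g := fun _ => (1 : ℝ))),
      Function.comp_def, integral_indicator_const _ ((hf.measurable.iterate i) hA), measureReal_def,
      (hf.iterate i).measure_preimage hA.nullMeasurableSet, smul_eq_mul, mul_one, measureReal_def]
  simp only [birkhoffAvg]
  rw [integral_const_mul, integral_finsetSum _ fun i _ =>
      integrable_indicator_one_comp (hf.measurable.iterate i) hA,
    Finset.sum_congr rfl fun i _ => hiter i, Finset.sum_const, Nat.card_Icc, Nat.add_sub_cancel,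
    nsmul_eq_mul, ← mul_assoc, inv_mul_cancel₀ (by exact_mod_cast hN.ne'), one_mul]

theorem two_mul_mul_measureReal_le_integral_abs_birkhoffAvg_sub [IsProbabilityMeasure μ]
    (hf : MeasurePreserving f μ μ) (hA : MeasurableSet A) (hG : MeasurableSet G) (hN : 0 < N)
    (hGA : ∀ x ∈ G, ∀ i ∈ Finset.Icc 1 N, f^[i] x ∈ A) :
    2 * (1 - μ.real A) * μ.real G ≤
      ∫ x, |birkhoffAvg f (A.indicator fun _ => 1) N x - μ.real A| ∂μ := by
  have hint := integrable_birkhoffAvg_indicator (μ := μ) (N := N) hf.measurable hA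
  refine two_mul_mul_measureReal_le_integral_abs
    (h := fun x => birkhoffAvg f (A.indicator fun _ => 1) N x - μ.real A)
    (hint.sub (integrable_const _)) ?_ hG fun x hx => ?_
  · rw [integral_sub hint (integrable_const _), integral_birkhoffAvg_indicator hf hA hN,
      integral_const, probReal_univ, one_smul, sub_self]
  · rw [birkhoffAvg_indicator_eq_one hN (hGA x hx)]

end BirkhoffAverage

namespace MeasurableEquiv

variable {X : Type*} [MeasurableSpace X] [StandardBorelSpace X] {μ : Measure X}
  [IsProbabilityMeasure μ] [NullSingletonClass μ] {T : X ≃ᵐ X}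

theorem exists_isTowerBase_measure_tower_eq (hT : MeasurePreserving T μ μ)
    (hTaper : μ {x | ∃ n, 1 ≤ n ∧ (⇑T)^[n] x = x} = 0) {N : ℕ} (hN : 0 < N) {s : ℝ≥0∞}
    (hs : 4 * s ≤ 1) : ∃ B, MeasurableSet B ∧ IsTowerBase T (2 * N) B ∧
      μ (tower T N B) = s ∧ μ (tower T (2 * N) B) = 2 * s := by
  have hNs : N * (s / N) = s := ENNReal.mul_div_cancel (by simp [hN.ne']) (ENNReal.natCast_ne_top N)
  obtain ⟨B, hB, hB_tower, hμB⟩ := exists_isTowerBase_measure_eq hT hTaper (n := 2 * N)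
    (by omega) (r := s / N)
    (by push_cast; rw [mul_assoc, mul_assoc, hNs, ← mul_assoc]; norm_num [hs])
  refine ⟨B, hB, hB_tower, ?_, ?_⟩
  · rw [hB_tower.measure_tower hT hB (by omega), hμB, hNs]
  · rw [hB_tower.measure_tower hT hB le_rfl, hμB, Nat.cast_mul, Nat.cast_two, mul_assoc, hNs]

/-- `A` contains, for every `j`, a tower of height `2 N j` and measure `2^{-(j+2)}`; the lower
half `G` of that tower stays in `A` for `N j` steps. -/
theorem exists_measure_eq_half_forall_iterate_mem (hT : MeasurePreserving T μ μ)
    (hTaper : μ {x | ∃ n, 1 ≤ n ∧ (⇑T)^[n] x = x} = 0) {N : ℕ → ℕ} (hN : ∀ j, 0 < N j) :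
    ∃ A, MeasurableSet A ∧ μ A = 1 / 2 ∧ ∀ j, ∃ G, MeasurableSet G ∧ μ G = 2⁻¹ ^ (j + 3) ∧
      ∀ x ∈ G, ∀ i ∈ Finset.Icc 1 (N j), (⇑T)^[i] x ∈ A := by
  have htwo (m : ℕ) : 2 * (2⁻¹ : ℝ≥0∞) ^ (m + 1) = 2⁻¹ ^ m := by
    rw [pow_succ', ← mul_assoc, ENNReal.mul_inv_cancel two_ne_zero ENNReal.ofNat_ne_top, one_mul]
  choose B hB hB_tower hμG hμtower using fun j =>
    exists_isTowerBase_measure_tower_eq hT hTaper (hN j) (s := 2⁻¹ ^ (j + 3)) <| by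
      rw [show (4 : ℝ≥0∞) = 2 * 2 by norm_num, mul_assoc, htwo, htwo]
      exact pow_le_one₀ zero_le (ENNReal.inv_le_one.2 one_le_two)
  set A₀ := ⋃ j, tower T (2 * N j) (B j)
  have hμA₀ : μ A₀ ≤ 2⁻¹ := by
    calc μ A₀ ≤ ∑' j, μ (tower T (2 * N j) (B j)) := measure_iUnion_le _
      _ = ∑' j : ℕ, 2⁻¹ * (2⁻¹ : ℝ≥0∞) ^ (j + 1) := by
          congr with j
          rw [hμtower, htwo, ← pow_succ']
      _ = 2⁻¹ := by
          rw [ENNReal.tsum_mul_left, ENNReal.tsum_geometric_add_one, ENNReal.one_sub_inv_two,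
            inv_inv, ENNReal.inv_mul_cancel two_ne_zero ENNReal.ofNat_ne_top, mul_one]
  obtain ⟨A, hA₀A, hA, hμA⟩ := exists_measurableSet_superset_measure_eq μ
    (.iUnion fun j => measurableSet_tower (hB j)) hμA₀ (by simp [ENNReal.inv_le_one])
  refine ⟨A, hA, by rw [hμA, one_div], fun j => ⟨_, measurableSet_tower (hB j), hμG j, ?_⟩⟩
  intro x hx i hi
  rw [← zpow_natCast_apply]
  exact hA₀A (mem_iUnion.2 ⟨j, zpow_mem_tower hx (by simp at hi; omega)⟩)

end MeasurableEquiv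

theorem slow_L1_convergence_quantitative_general
    {X : Type*} [MeasurableSpace X] [StandardBorelSpace X]
    (μ : Measure X) [IsProbabilityMeasure μ] [NullSingletonClass μ]
    (T : X ≃ᵐ X) (hT : MeasurePreserving T μ μ)
    (hTaper : μ {x | ∃ n, 1 ≤ n ∧ (⇑T)^[n] x = x} = 0)
    (ψ : ℕ → ℝ) (hψ0 : Tendsto ψ atTop (nhds 0)) :
    ∃ A : Set X, MeasurableSet A ∧ μ A = 1 / 2 ∧
      ∃ N : ℕ → ℕ, StrictMono N ∧ (∀ j, 0 < N j) ∧
        ∀ j, 1 ≤ j →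
          ((2 : ℝ)⁻¹) ^ (j + 2)
              ≤ ∫ x, |birkhoffAvg T (A.indicator (fun _ => (1 : ℝ))) (N j) x - 1 / 2| ∂μ ∧
            ψ (N j) ≤ ((2 : ℝ)⁻¹) ^ (j + 2) / j := by
  obtain ⟨N, hN_mono, hN⟩ := extraction_forall_of_eventually
    (P := fun j k => 0 < k ∧ (1 ≤ j → ψ k ≤ (2⁻¹ : ℝ) ^ (j + 2) / j)) fun j =>
      (eventually_gt_atTop 0).and <| by
        rcases Nat.eq_zero_or_pos j with rfl | hj
        · exact .of_forall fun _ h => absurd h (by omega)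
        · exact (hψ0.eventually (ge_mem_nhds (by positivity))).mono fun _ h _ => h
  obtain ⟨A, hA, hμA, hG⟩ := MeasurableEquiv.exists_measure_eq_half_forall_iterate_mem hT hTaper
    (N := fun j => N (j + 1)) fun j => (hN _).1
  refine ⟨A, hA, hμA, N, hN_mono, fun j => (hN j).1, fun j hj => ⟨?_, (hN j).2 hj⟩⟩
  obtain ⟨k, rfl⟩ : ∃ k, j = k + 1 := ⟨j - 1, by omega⟩
  obtain ⟨G, hG, hμG, hGA⟩ := hG k
  have hμA' : μ.real A = 1 / 2 := by simp [measureReal_def, hμA]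
  have hL1 := two_mul_mul_measureReal_le_integral_abs_birkhoffAvg_sub hT hA hG (hN _).1 hGA
  rw [hμA'] at hL1
  convert hL1 using 1
  rw [measureReal_def, hμG]
  norm_num

/-- For an aperiodic automorphism of a nonatomic standard Borel probability space and a
positive sequence `ψ(N) → 0`, there are a set `A` of measure `1/2` and times `N_j → ∞` with
`‖f_{N_j}(T,·) − 1/2‖_{L¹} ≥ 2^{-j-2}` while `ψ(N_j) ≤ 2^{-j-2}/j`, for `f = χ_A`. -/
theorem slow_L1_convergence_quantitative
    {X : Type*} [MeasurableSpace X] [StandardBorelSpace X]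
    (μ : Measure X) [IsProbabilityMeasure μ] [NullSingletonClass μ]
    (T : X ≃ᵐ X) (hT : MeasurePreserving T μ μ)
    (hTaper : μ {x | ∃ n, 1 ≤ n ∧ (⇑T)^[n] x = x} = 0)
    (ψ : ℕ → ℝ) (hψpos : ∀ N, 0 < ψ N) (hψ0 : Tendsto ψ atTop (nhds 0)) :
    ∃ A : Set X, MeasurableSet A ∧ μ A = 1 / 2 ∧
      ∃ N : ℕ → ℕ, StrictMono N ∧ (∀ j, 0 < N j) ∧
        ∀ j, 1 ≤ j →
          ((2 : ℝ)⁻¹) ^ (j + 2)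
              ≤ ∫ x, |birkhoffAvg T (A.indicator (fun _ => (1 : ℝ))) (N j) x - 1 / 2| ∂μ ∧
            ψ (N j) ≤ ((2 : ℝ)⁻¹) ^ (j + 2) / j :=
  slow_L1_convergence_quantitative_general μ T hT hTaper ψ hψ0
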